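/- arXiv:2206.09945 — 2 statements merged into one kernel-verified Lean document; each statement's English description precedes it below -/
import Mathlib

section
/- Assume (A12, A22) is observable and (A, B) is controllable. Then for every K ∈ ℝ^{(n−p)×p} and every μ ∈ ℂ: (i) the complex (n+p)×n matrix [[(A22 + K·A12) − μI_{n−p}, 0],[0, I_p],[A12, I_p]] has full column rank n, and (ii) the complex n×(n+p+m) matrix [[(A22 + K·A12) − μI_{n−p}, 0, K·A12·K + A22·K − K·A11 − A21, K·B1 + B2],[0, I_p, −μI_p, 0]] has full row rank n; that is, the Rosenbrock-type realization of [λI_p − W, V] is irreducible. -/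
/-!
(i) A kernel vector `(x₁, x₂)` of the stacked pencil has `x₂ = 0` and `A12 x₁ = 0`; the output
injection `K A12` then drops out of the first block row, so `(A22 - μ) x₁ = 0` and the
Hautus test for observability forces `x₁ = 0`.

(ii) A left kernel vector `(u₁, u₂)` of the wide pencil has `u₂ = 0`, and then `(u₁ K, u₁)` is a
left kernel vector of `[A - μ I, B]`, the wide pencil being `[A - μ I, B]` written in the
coordinates `x₂ ↦ x₂ + K x₁` (up to the block rows that force `u₂ = 0`). Controllability
forces `u₁ = 0`.
-/

open Matrix Polynomial

set_option synthInstance.maxHeartbeats 1000000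
set_option maxHeartbeats 1000000

noncomputable section

/-- The field of real rational functions. -/
abbrev FF : Type := RatFunc ℝ

/-- The rational function `λ` (the image of the polynomial indeterminate `X`). -/
noncomputable def lam : FF := RatFunc.X

/-- Entrywise embedding of a real matrix into matrices over `FF`. -/
noncomputable def mapF {k l : Type} (M : Matrix k l ℝ) : Matrix k l FF :=
  M.map (algebraMap ℝ FF)

/-- The pencil `λ I - M` over `FF`, for a real square matrix `M`. -/
noncomputable def lamI {k : Type} [Fintype k] [DecidableEq k] (M : Matrix k k ℝ) :
    Matrix k k FF := lam • (1 : Matrix k k FF) - mapF M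

/-- Entrywise complexification of a real matrix. -/
def mapC {k l : Type} (M : Matrix k l ℝ) : Matrix k l ℂ :=
  M.map (algebraMap ℝ ℂ)

/-- A real rational function is stable if every complex root of its reduced denominator
has real part `< 0`. -/
def StableF (f : RatFunc ℝ) : Prop :=
  ∀ z : ℂ, ((f.denom).map (algebraMap ℝ ℂ)).IsRoot z → z.re < 0

/-- A real square matrix is Hurwitz if all roots of its characteristic polynomial
have real part `< 0`. -/
def IsHurwitz {k : Type} [Fintype k] [DecidableEq k] (M : Matrix k k ℝ) : Prop :=
  ∀ z : ℂ, ((M.charpoly).map (algebraMap ℝ ℂ)).IsRoot z → z.re < 0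

/-- `A_K := K A11 - K A12 K + A21 - A22 K`. -/
noncomputable def AKmat {p r : ℕ} (A11 : Matrix (Fin p) (Fin p) ℝ)
    (A12 : Matrix (Fin p) (Fin r) ℝ) (A21 : Matrix (Fin r) (Fin p) ℝ)
    (A22 : Matrix (Fin r) (Fin r) ℝ) (K : Matrix (Fin r) (Fin p) ℝ) :
    Matrix (Fin r) (Fin p) ℝ :=
  K * A11 - K * A12 * K + A21 - A22 * K

/-- The `W` member of the SRTR pair obtained from `K`. -/
noncomputable def srtrW {p r : ℕ} (A11 : Matrix (Fin p) (Fin p) ℝ)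
    (A12 : Matrix (Fin p) (Fin r) ℝ) (A21 : Matrix (Fin r) (Fin p) ℝ)
    (A22 : Matrix (Fin r) (Fin r) ℝ) (K : Matrix (Fin r) (Fin p) ℝ) :
    Matrix (Fin p) (Fin p) FF :=
  mapF (A11 - A12 * K) +
    mapF A12 * (lamI (A22 + K * A12))⁻¹ * mapF (AKmat A11 A12 A21 A22 K)

/-- The `V` member of the SRTR pair obtained from `K`. -/
noncomputable def srtrV {p r m : ℕ} (A12 : Matrix (Fin p) (Fin r) ℝ)
    (A22 : Matrix (Fin r) (Fin r) ℝ) (B1 : Matrix (Fin p) (Fin m) ℝ)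
    (B2 : Matrix (Fin r) (Fin m) ℝ) (K : Matrix (Fin r) (Fin p) ℝ) :
    Matrix (Fin p) (Fin m) FF :=
  mapF B1 + mapF A12 * (lamI (A22 + K * A12))⁻¹ * mapF (K * B1 + B2)

/-- The plant transfer function `G = [I_p 0] (λ I_n - A)⁻¹ B`. -/
noncomputable def plantG {p r m : ℕ} (A11 : Matrix (Fin p) (Fin p) ℝ)
    (A12 : Matrix (Fin p) (Fin r) ℝ) (A21 : Matrix (Fin r) (Fin p) ℝ)
    (A22 : Matrix (Fin r) (Fin r) ℝ) (B1 : Matrix (Fin p) (Fin m) ℝ)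
    (B2 : Matrix (Fin r) (Fin m) ℝ) : Matrix (Fin p) (Fin m) FF :=
  fromCols (1 : Matrix (Fin p) (Fin p) FF) (0 : Matrix (Fin p) (Fin r) FF) *
    (lamI (fromBlocks A11 A12 A21 A22))⁻¹ * mapF (fromRows B1 B2)

/-- `(A12, A22)` is observable: `[A22 - μ I ; A12]` has full column rank for all `μ : ℂ`. -/
def ObsPair {p r : ℕ} (A12 : Matrix (Fin p) (Fin r) ℝ)
    (A22 : Matrix (Fin r) (Fin r) ℝ) : Prop :=
  ∀ μ : ℂ, (fromRows (mapC A22 - μ • (1 : Matrix (Fin r) (Fin r) ℂ)) (mapC A12)).rank = r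

/-- `(A, B)` is controllable: `[A - μ I, B]` has full row rank for all `μ : ℂ`. -/
def CtrbPair {p r m : ℕ} (A : Matrix (Fin p ⊕ Fin r) (Fin p ⊕ Fin r) ℝ)
    (B : Matrix (Fin p ⊕ Fin r) (Fin m) ℝ) : Prop :=
  ∀ μ : ℂ, (fromCols (mapC A - μ • (1 : Matrix (Fin p ⊕ Fin r) (Fin p ⊕ Fin r) ℂ))
    (mapC B)).rank = p + r


namespace Matrix

variable {𝕜 : Type*} [Field 𝕜] {m n : Type*} [Fintype n]

theorem rank_eq_card_iff_forall_mulVec_eq_zero (A : Matrix m n 𝕜) :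
    A.rank = Fintype.card n ↔ ∀ x, A *ᵥ x = 0 → x = 0 := by
  have rank_nullity := LinearMap.finrank_range_add_finrank_ker A.mulVecLin
  rw [Module.finrank_fintype_fun_eq_card] at rank_nullity
  have ker_trivial : (∀ x, A *ᵥ x = 0 → x = 0) ↔ LinearMap.ker A.mulVecLin = ⊥ :=
    (LinearMap.ker_eq_bot' (f := A.mulVecLin)).symm
  rw [ker_trivial, ← Submodule.finrank_eq_zero (R := 𝕜), rank]
  omega

theorem rank_eq_card_iff_forall_vecMul_eq_zero [Fintype m] (A : Matrix m n 𝕜) :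
    A.rank = Fintype.card m ↔ ∀ y, y ᵥ* A = 0 → y = 0 := by
  simp only [← rank_transpose A, rank_eq_card_iff_forall_mulVec_eq_zero, mulVec_transpose]

theorem fromBlocks_sub_smul_one {R : Type*} [CommRing R] {ι κ : Type*} [DecidableEq ι]
    [DecidableEq κ] (A : Matrix ι ι R) (B : Matrix ι κ R) (C : Matrix κ ι R)
    (D : Matrix κ κ R) (c : R) :
    fromBlocks A B C D - c • 1 = fromBlocks (A - c • 1) B C (D - c • 1) := by
  ext (i | i) (j | j) <;> simp [one_apply]

end Matrix

section Pencil

variable {R : Type*} [CommRing R] {ι κ ν : Type*} [Fintype ι] [Fintype κ] [DecidableEq κ]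

theorem forall_mulVec_eq_zero_of_outputInjection (E : Matrix ι ι R) (C : Matrix κ ι R)
    (K : Matrix ι κ R) (hobs : ∀ x, fromRows E C *ᵥ x = 0 → x = 0) :
    ∀ x, fromRows (fromBlocks (E + K * C) 0 0 (1 : Matrix κ κ R)) (fromCols C 1) *ᵥ x = 0 →
      x = 0 := by
  intro x hx
  obtain ⟨x₁, x₂, rfl⟩ : ∃ x₁ x₂, x = Sum.elim x₁ x₂ :=
    ⟨x ∘ Sum.inl, x ∘ Sum.inr, (Sum.elim_comp_inl_inr x).symm⟩
  simp only [fromRows_mulVec, fromBlocks_mulVec, fromCols_mulVec_sumElim, Sum.elim_comp_inl,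
    Sum.elim_comp_inr, zero_mulVec, add_zero, zero_add, one_mulVec, ← Sum.elim_zero_zero,
    Sum.elim_eq_iff] at hx
  obtain ⟨⟨hE, rfl⟩, hC⟩ := hx
  rw [add_zero] at hC
  rw [add_mulVec, ← mulVec_mulVec, hC, mulVec_zero, add_zero] at hE
  rw [hobs x₁ (by rw [fromRows_mulVec, hE, hC, Sum.elim_zero_zero]), Sum.elim_zero_zero]

theorem forall_vecMul_eq_zero_of_coordinateChange (F : Matrix κ κ R) (C : Matrix κ ι R)
    (G : Matrix ι κ R) (E : Matrix ι ι R) (B₁ : Matrix κ ν R) (B₂ : Matrix ι ν R)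
    (K : Matrix ι κ R) (M : Matrix κ κ R)
    (hctrb : ∀ z, z ᵥ* fromCols (fromBlocks F C G E) (fromRows B₁ B₂) = 0 → z = 0) :
    ∀ u, u ᵥ* fromBlocks (fromCols (E + K * C) 0)
      (fromCols ((E + K * C) * K - (K * F + G)) (K * B₁ + B₂))
      (fromCols 0 (1 : Matrix κ κ R)) (fromCols M 0) = 0 → u = 0 := by
  intro u hu
  obtain ⟨u₁, u₂, rfl⟩ : ∃ u₁ u₂, u = Sum.elim u₁ u₂ :=
    ⟨u ∘ Sum.inl, u ∘ Sum.inr, (Sum.elim_comp_inl_inr u).symm⟩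
  simp only [vecMul_fromBlocks, vecMul_fromCols, Sum.elim_comp_inl, Sum.elim_comp_inr,
    ← Sum.elim_add_add, vecMul_zero, vecMul_one, add_zero, zero_add, ← Sum.elim_zero_zero,
    Sum.elim_eq_iff] at hu
  obtain ⟨⟨hE, rfl⟩, hN, hB⟩ := hu
  rw [zero_vecMul, add_zero] at hN
  have hF : u₁ ᵥ* (K * F + G) = 0 := by
    rw [← sub_sub_cancel ((E + K * C) * K) (K * F + G), vecMul_sub, hN, ← vecMul_vecMul, hE,
      zero_vecMul, sub_zero]
  have hz := hctrb (Sum.elim (u₁ ᵥ* K) u₁) <| by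
    rw [vecMul_fromCols, vecMul_fromBlocks, sumElim_vecMul_fromRows]
    simp only [Sum.elim_comp_inl, Sum.elim_comp_inr, vecMul_vecMul, ← vecMul_add]
    rw [hF, add_comm (K * C), hE, hB, Sum.elim_zero_zero, Sum.elim_zero_zero]
  rw [← Sum.elim_zero_zero, Sum.elim_eq_iff] at hz
  rw [hz.2, Sum.elim_zero_zero]

end Pencil

theorem mapC_add {k l : Type} (M N : Matrix k l ℝ) : mapC (M + N) = mapC M + mapC N :=
  Matrix.map_add _ (map_add _) M N

theorem mapC_sub {k l : Type} (M N : Matrix k l ℝ) : mapC (M - N) = mapC M - mapC N :=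
  Matrix.map_sub _ (map_sub _) M N

theorem mapC_mul {k l o : Type} [Fintype l] (M : Matrix k l ℝ) (N : Matrix l o ℝ) :
    mapC (M * N) = mapC M * mapC N :=
  Matrix.map_mul

theorem mapC_fromRows {k₁ k₂ l : Type} (M₁ : Matrix k₁ l ℝ) (M₂ : Matrix k₂ l ℝ) :
    mapC (fromRows M₁ M₂) = fromRows (mapC M₁) (mapC M₂) :=
  fromRows_map M₁ M₂ _

theorem mapC_fromBlocks {k₁ k₂ l₁ l₂ : Type} (M₁₁ : Matrix k₁ l₁ ℝ) (M₁₂ : Matrix k₁ l₂ ℝ)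
    (M₂₁ : Matrix k₂ l₁ ℝ) (M₂₂ : Matrix k₂ l₂ ℝ) :
    mapC (fromBlocks M₁₁ M₁₂ M₂₁ M₂₂) = fromBlocks (mapC M₁₁) (mapC M₁₂) (mapC M₂₁) (mapC M₂₂) :=
  fromBlocks_map M₁₁ M₁₂ M₂₁ M₂₂ _

theorem ObsPair.mulVec_eq_zero {p r : ℕ} {A12 : Matrix (Fin p) (Fin r) ℝ}
    {A22 : Matrix (Fin r) (Fin r) ℝ} (hobs : ObsPair A12 A22) (μ : ℂ) :
    ∀ x, fromRows (mapC A22 - μ • (1 : Matrix (Fin r) (Fin r) ℂ)) (mapC A12) *ᵥ x = 0 →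
      x = 0 :=
  (rank_eq_card_iff_forall_mulVec_eq_zero _).1 (by rw [hobs μ, Fintype.card_fin])

theorem CtrbPair.vecMul_eq_zero {p r m : ℕ} {A11 : Matrix (Fin p) (Fin p) ℝ}
    {A12 : Matrix (Fin p) (Fin r) ℝ} {A21 : Matrix (Fin r) (Fin p) ℝ}
    {A22 : Matrix (Fin r) (Fin r) ℝ} {B1 : Matrix (Fin p) (Fin m) ℝ}
    {B2 : Matrix (Fin r) (Fin m) ℝ}
    (hctrb : CtrbPair (fromBlocks A11 A12 A21 A22) (fromRows B1 B2)) (μ : ℂ) :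
    ∀ z, z ᵥ* fromCols
      (fromBlocks (mapC A11 - μ • (1 : Matrix (Fin p) (Fin p) ℂ)) (mapC A12) (mapC A21)
        (mapC A22 - μ • (1 : Matrix (Fin r) (Fin r) ℂ)))
      (fromRows (mapC B1) (mapC B2)) = 0 → z = 0 := by
  have h := hctrb μ
  rw [mapC_fromBlocks, mapC_fromRows, fromBlocks_sub_smul_one] at h
  refine (rank_eq_card_iff_forall_vecMul_eq_zero _).1 ?_
  rw [h, Fintype.card_sum, Fintype.card_fin, Fintype.card_fin]

theorem stmt_7_general (p r m : ℕ)
    (A11 : Matrix (Fin p) (Fin p) ℝ) (A12 : Matrix (Fin p) (Fin r) ℝ)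
    (A21 : Matrix (Fin r) (Fin p) ℝ) (A22 : Matrix (Fin r) (Fin r) ℝ)
    (B1 : Matrix (Fin p) (Fin m) ℝ) (B2 : Matrix (Fin r) (Fin m) ℝ)
    (hobs : ObsPair A12 A22)
    (hctrb : CtrbPair (fromBlocks A11 A12 A21 A22) (fromRows B1 B2)) :
    ∀ (K : Matrix (Fin r) (Fin p) ℝ) (μ : ℂ),
      (fromRows
        (fromBlocks (mapC (A22 + K * A12) - μ • (1 : Matrix (Fin r) (Fin r) ℂ))
          (0 : Matrix (Fin r) (Fin p) ℂ) (0 : Matrix (Fin p) (Fin r) ℂ)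
          (1 : Matrix (Fin p) (Fin p) ℂ))
        (fromCols (mapC A12) (1 : Matrix (Fin p) (Fin p) ℂ))).rank = r + p ∧
      (fromBlocks
        (fromCols (mapC (A22 + K * A12) - μ • (1 : Matrix (Fin r) (Fin r) ℂ))
          (0 : Matrix (Fin r) (Fin p) ℂ))
        (fromCols (mapC (K * A12 * K + A22 * K - K * A11 - A21)) (mapC (K * B1 + B2)))
        (fromCols (0 : Matrix (Fin p) (Fin r) ℂ) (1 : Matrix (Fin p) (Fin p) ℂ))
        (fromCols (-(μ • (1 : Matrix (Fin p) (Fin p) ℂ)))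
          (0 : Matrix (Fin p) (Fin m) ℂ))).rank = r + p := by
  intro K μ
  have hE : mapC (A22 + K * A12) - μ • 1
      = (mapC A22 - μ • 1) + mapC K * mapC A12 := by
    rw [mapC_add, mapC_mul]; abel
  have hN : mapC (K * A12 * K + A22 * K - K * A11 - A21)
      = ((mapC A22 - μ • 1) + mapC K * mapC A12) * mapC K
        - (mapC K * (mapC A11 - μ • 1) + mapC A21) := by
    simp only [mapC_add, mapC_sub, mapC_mul, Matrix.add_mul, Matrix.sub_mul, Matrix.mul_sub,
      Matrix.smul_mul, Matrix.mul_smul, Matrix.one_mul, Matrix.mul_one, Matrix.mul_assoc]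
    abel
  have hB : mapC (K * B1 + B2) = mapC K * mapC B1 + mapC B2 := by rw [mapC_add, mapC_mul]
  have hcard : r + p = Fintype.card (Fin r ⊕ Fin p) := by simp
  rw [hE, hN, hB, hcard, rank_eq_card_iff_forall_mulVec_eq_zero,
    rank_eq_card_iff_forall_vecMul_eq_zero]
  exact ⟨forall_mulVec_eq_zero_of_outputInjection _ _ _ (hobs.mulVec_eq_zero μ),
    forall_vecMul_eq_zero_of_coordinateChange _ _ _ _ _ _ _ _ (hctrb.vecMul_eq_zero μ)⟩

/-- under observability and controllability, the Rosenbrock-type realization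
of `[λ I_p - W, V]` is irreducible: for every `K` and `μ : ℂ`, (i) the stacked pencil has
full column rank `n` and (ii) the wide pencil has full row rank `n`. -/
theorem stmt_7 (p r m : ℕ) (hp : 0 < p) (hr : 0 < r) (hm : 0 < m)
    (A11 : Matrix (Fin p) (Fin p) ℝ) (A12 : Matrix (Fin p) (Fin r) ℝ)
    (A21 : Matrix (Fin r) (Fin p) ℝ) (A22 : Matrix (Fin r) (Fin r) ℝ)
    (B1 : Matrix (Fin p) (Fin m) ℝ) (B2 : Matrix (Fin r) (Fin m) ℝ)
    (hobs : ObsPair A12 A22)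
    (hctrb : CtrbPair (fromBlocks A11 A12 A21 A22) (fromRows B1 B2)) :
    ∀ (K : Matrix (Fin r) (Fin p) ℝ) (μ : ℂ),
      (fromRows
        (fromBlocks (mapC (A22 + K * A12) - μ • (1 : Matrix (Fin r) (Fin r) ℂ))
          (0 : Matrix (Fin r) (Fin p) ℂ) (0 : Matrix (Fin p) (Fin r) ℂ)
          (1 : Matrix (Fin p) (Fin p) ℂ))
        (fromCols (mapC A12) (1 : Matrix (Fin p) (Fin p) ℂ))).rank = r + p ∧
      (fromBlocks
        (fromCols (mapC (A22 + K * A12) - μ • (1 : Matrix (Fin r) (Fin r) ℂ))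
          (0 : Matrix (Fin r) (Fin p) ℂ))
        (fromCols (mapC (K * A12 * K + A22 * K - K * A11 - A21)) (mapC (K * B1 + B2)))
        (fromCols (0 : Matrix (Fin p) (Fin r) ℂ) (1 : Matrix (Fin p) (Fin p) ℂ))
        (fromCols (-(μ • (1 : Matrix (Fin p) (Fin p) ℂ)))
          (0 : Matrix (Fin p) (Fin m) ℂ))).rank = r + p :=
  stmt_7_general p r m A11 A12 A21 A22 B1 B2 hobs hctrb
end
end

section
/- Let A_x ∈ ℝ^{p×p} be Hurwitz, let B_x, C_x ∈ ℝ^{p×p} be invertible, and let K ∈ ℝ^{(n−p)×p} be such that A22 + K·A12 is Hurwitz. Define Θ := C_x·(λI_p − A_x)^{-1}·B_x ∈ F^{p×p}, Â := [[A_x, B_x·A12],[0, A22 + K·A12]] ∈ ℝ^{n×n}, B̂ := [[A_x·B_x − B_x·A11 + B_x·A12·K, B_x·B1],[K·A12·K + A22·K − K·A11 − A21, K·B1 + B2]] ∈ ℝ^{n×(p+m)}, and [M N] := [C_x, 0]·(λI_n − Â)^{-1}·B̂ + [C_x·B_x, 0] with M ∈ F^{p×p}, N ∈ F^{p×m}.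 Then Θ·(λI_p − W) = M and Θ·V = N; moreover M is invertible over F, M^{-1}·N = G, and every entry of M and of N is stable. -/
open Matrix Polynomial

set_option synthInstance.maxHeartbeats 1000000
set_option maxHeartbeats 1000000

noncomputable section

/-!
Since `Â` is block upper triangular, `(λI - Â)⁻¹` is explicit, and expanding
`[C_x 0] (λI - Â)⁻¹ B̂ + [C_x B_x 0]` with `λ (λI - A_x)⁻¹ B_x = B_x + (λI - A_x)⁻¹ A_x B_x`
gives exactly `Θ [λI - W, V]`.

`Θ` is invertible, and so is `λI - W`: it is the Schur complement of `λI - (A22 + K A12)` in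
`λI - [[A11 - A12 K, A12], [A_K, A22 + K A12]]`, and both have a characteristic polynomial as
determinant. Writing
`(λI - A)⁻¹ B = [X₁; X₂]`, the combination `X₂ + K X₁` satisfies
`(λI - A22 - K A12) (X₂ + K X₁) = K B1 + B2 + A_K X₁`; substituting this into the first block row
of `(λI - A) X = B` gives `(λI - W) X₁ = V`, hence `M⁻¹ N = (λI - W)⁻¹ V = X₁ = G`.

Stable rational functions form a subring, and the entries of `(λI - Â)⁻¹` are `adj / χ_Â` with
`χ_Â = χ_{A_x} χ_{A22 + K A12}` Hurwitz, so all entries of `[M N]` are stable.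
-/

section MapF

variable {a b c d : Type}

lemma mapF_add (M N : Matrix a b ℝ) : mapF (M + N) = mapF M + mapF N :=
  Matrix.map_add _ (map_add _) M N

lemma mapF_sub (M N : Matrix a b ℝ) : mapF (M - N) = mapF M - mapF N :=
  Matrix.map_sub _ (map_sub _) M N

lemma mapF_zero : mapF (0 : Matrix a b ℝ) = 0 :=
  Matrix.map_zero _ (map_zero _)

lemma mapF_mul [Fintype b] (M : Matrix a b ℝ) (N : Matrix b c ℝ) :
    mapF (M * N) = mapF M * mapF N :=
  Matrix.map_mul

lemma mapF_fromBlocks (A : Matrix a c ℝ) (B : Matrix a d ℝ) (C : Matrix b c ℝ)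
    (D : Matrix b d ℝ) :
    mapF (fromBlocks A B C D) = fromBlocks (mapF A) (mapF B) (mapF C) (mapF D) :=
  fromBlocks_map _ _ _ _ _

lemma mapF_fromRows (A : Matrix a c ℝ) (B : Matrix b c ℝ) :
    mapF (fromRows A B) = fromRows (mapF A) (mapF B) :=
  fromRows_map _ _ _

lemma mapF_fromCols (A : Matrix a b ℝ) (B : Matrix a c ℝ) :
    mapF (fromCols A B) = fromCols (mapF A) (mapF B) :=
  fromCols_map _ _ _

lemma isUnit_mapF [Fintype a] [DecidableEq a] {M : Matrix a a ℝ} (hM : IsUnit M) :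
    IsUnit (mapF M) :=
  hM.map (algebraMap ℝ FF).mapMatrix

lemma fromCols_add_fromCols {R : Type} [Add R] (A C : Matrix a b R) (B D : Matrix a c R) :
    fromCols A B + fromCols C D = fromCols (A + C) (B + D) := by
  ext i (j | j) <;> rfl

end MapF

section Pencil

variable {k l : Type} [Fintype k] [DecidableEq k]

lemma lamI_eq_map_charmatrix (M : Matrix k k ℝ) :
    lamI M = (charmatrix M).map (algebraMap ℝ[X] FF) := by
  ext i j
  rcases eq_or_ne i j with rfl | h
  · simp [lamI, mapF, lam, RatFunc.algebraMap_X, RatFunc.algebraMap_C]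
  · simp [lamI, mapF, h, RatFunc.algebraMap_C]

lemma det_lamI (M : Matrix k k ℝ) : (lamI M).det = algebraMap ℝ[X] FF M.charpoly := by
  rw [lamI_eq_map_charmatrix, ← RingHom.mapMatrix_apply, ← RingHom.map_det, charpoly]

lemma isUnit_det_lamI (M : Matrix k k ℝ) : IsUnit (lamI M).det := by
  rw [det_lamI, isUnit_iff_ne_zero]
  exact RatFunc.algebraMap_ne_zero M.charpoly_monic.ne_zero

lemma isUnit_lamI (M : Matrix k k ℝ) : IsUnit (lamI M) :=
  (isUnit_iff_isUnit_det _).2 (isUnit_det_lamI M)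

lemma lamI_mul_inv_lamI (M : Matrix k k ℝ) : lamI M * (lamI M)⁻¹ = 1 :=
  mul_nonsing_inv _ (isUnit_det_lamI M)

lemma inv_lamI_mul_lamI_mul (M : Matrix k k ℝ) (Y : Matrix k l FF) :
    (lamI M)⁻¹ * (lamI M * Y) = Y := by
  rw [← Matrix.mul_assoc, nonsing_inv_mul _ (isUnit_det_lamI M), Matrix.one_mul]

lemma inv_lamI_eq_smul_adjugate (M : Matrix k k ℝ) :
    (lamI M)⁻¹ = (algebraMap ℝ[X] FF M.charpoly)⁻¹ •
      (adjugate (charmatrix M)).map (algebraMap ℝ[X] FF) := by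
  rw [inv_def, det_lamI, lamI_eq_map_charmatrix, ← RingHom.mapMatrix_apply,
    ← RingHom.map_adjugate, Ring.inverse_eq_inv', RingHom.mapMatrix_apply]

lemma lam_smul_inv_lamI_mul (M : Matrix k k ℝ) (Y : Matrix k l FF) :
    lam • ((lamI M)⁻¹ * Y) = Y + (lamI M)⁻¹ * (mapF M * Y) := by
  have hY : lam • Y = lamI M * Y + mapF M * Y := by
    rw [lamI, Matrix.sub_mul, Matrix.smul_mul, Matrix.one_mul, sub_add_cancel]
  rw [← Matrix.mul_smul, hY, Matrix.mul_add, inv_lamI_mul_lamI_mul]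

lemma lamI_fromBlocks [Fintype l] [DecidableEq l] (A : Matrix k k ℝ) (B : Matrix k l ℝ)
    (C : Matrix l k ℝ) (D : Matrix l l ℝ) :
    lamI (fromBlocks A B C D) = fromBlocks (lamI A) (-mapF B) (-mapF C) (lamI D) := by
  ext (i | i) (j | j) <;> simp [lamI, mapF, one_apply]

end Pencil

section Stability

lemma StableF.of_denom_dvd {f : FF} {q : ℝ[X]} (hfq : f.denom ∣ q)
    (hq : ∀ z : ℂ, (q.map (algebraMap ℝ ℂ)).IsRoot z → z.re < 0) : StableF f := by
  obtain ⟨t, rfl⟩ := hfq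
  intro z hz
  apply hq z
  simp [Polynomial.IsRoot.def, hz.eq_zero]

lemma StableF.of_denom_dvd_mul {f g h : FF} (hfgh : f.denom ∣ g.denom * h.denom)
    (hg : StableF g) (hh : StableF h) : StableF f := by
  refine StableF.of_denom_dvd hfgh fun z hz => ?_
  rw [Polynomial.map_mul, Polynomial.IsRoot.def, eval_mul, mul_eq_zero] at hz
  exact hz.elim (hg z) (hh z)

lemma stableF_algebraMap (P : ℝ[X]) : StableF (algebraMap ℝ[X] FF P) := by
  intro z hz
  simp [RatFunc.denom_algebraMap] at hz

def stableSubring : Subring FF where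
  carrier := {f | StableF f}
  mul_mem' {f g} hf hg := StableF.of_denom_dvd_mul (RatFunc.denom_mul_dvd f g) hf hg
  one_mem' := by simpa using stableF_algebraMap 1
  add_mem' {f g} hf hg := StableF.of_denom_dvd_mul (RatFunc.denom_add_dvd f g) hf hg
  zero_mem' := by simpa using stableF_algebraMap 0
  neg_mem' {f} hf := by
    rw [neg_eq_neg_one_mul]
    exact StableF.of_denom_dvd_mul (RatFunc.denom_mul_dvd _ f)
      (by simpa using stableF_algebraMap (-1)) hf

variable {a b c : Type} [Fintype b]

lemma mapF_apply_mem_stableSubring (M : Matrix a c ℝ) (i : a) (j : c) :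
    mapF M i j ∈ stableSubring := by
  show StableF _
  simpa [mapF, ← RatFunc.algebraMap_C] using stableF_algebraMap (C (M i j))

lemma mul_apply_mem_stableSubring {P : Matrix a b FF} {Q : Matrix b c FF}
    (hP : ∀ i j, P i j ∈ stableSubring) (hQ : ∀ i j, Q i j ∈ stableSubring) (i : a) (j : c) :
    (P * Q) i j ∈ stableSubring :=
  sum_mem fun x _ => mul_mem (hP i x) (hQ x j)

variable [DecidableEq b]

lemma IsHurwitz.inv_lamI_apply_mem_stableSubring {A : Matrix b b ℝ} (hA : IsHurwitz A)
    (i j : b) : (lamI A)⁻¹ i j ∈ stableSubring := by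
  rw [inv_lamI_eq_smul_adjugate, Matrix.smul_apply, map_apply, smul_eq_mul, ← div_eq_inv_mul]
  exact StableF.of_denom_dvd (RatFunc.denom_div_dvd _ _) hA

lemma IsHurwitz.transfer_apply_mem_stableSubring {A : Matrix b b ℝ} (hA : IsHurwitz A)
    (C : Matrix a b ℝ) (B : Matrix b c ℝ) (D : Matrix a c ℝ) (i : a) (j : c) :
    (mapF C * (lamI A)⁻¹ * mapF B + mapF D) i j ∈ stableSubring :=
  add_mem (mul_apply_mem_stableSubring
    (mul_apply_mem_stableSubring (mapF_apply_mem_stableSubring C)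
      hA.inv_lamI_apply_mem_stableSubring) (mapF_apply_mem_stableSubring B) i j)
    (mapF_apply_mem_stableSubring D i j)

end Stability

lemma IsHurwitz.fromBlocks_zero₂₁ {k l : Type} [Fintype k] [DecidableEq k] [Fintype l]
    [DecidableEq l] {A : Matrix k k ℝ} {D : Matrix l l ℝ} (hA : IsHurwitz A) (hD : IsHurwitz D)
    (B : Matrix k l ℝ) : IsHurwitz (fromBlocks A B 0 D) := by
  intro z hz
  rw [charpoly_fromBlocks_zero₂₁, Polynomial.map_mul, Polynomial.IsRoot.def, eval_mul,
    mul_eq_zero] at hz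
  exact hz.elim (hA z) (hD z)

lemma isUnit_lamI_sub_mul_inv_lamI_mul {k l : Type} [Fintype k] [DecidableEq k] [Fintype l]
    [DecidableEq l] (P : Matrix k k ℝ) (Q : Matrix k l ℝ) (R : Matrix l k ℝ) (T : Matrix l l ℝ) :
    IsUnit (lamI P - mapF Q * (lamI T)⁻¹ * mapF R) := by
  let := (lamI T).invertibleOfIsUnitDet (isUnit_det_lamI T)
  have hdet := det_fromBlocks₂₂ (lamI P) (-mapF Q) (-mapF R) (lamI T)
  simp only [← lamI_fromBlocks, invOf_eq_nonsing_inv, Matrix.neg_mul, Matrix.mul_neg,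
    neg_neg] at hdet
  rw [isUnit_iff_isUnit_det]
  exact isUnit_of_mul_isUnit_right (hdet ▸ isUnit_det_lamI _)

section SRTR

variable {p r m : ℕ} (A11 : Matrix (Fin p) (Fin p) ℝ) (A12 : Matrix (Fin p) (Fin r) ℝ)
  (A21 : Matrix (Fin r) (Fin p) ℝ) (A22 : Matrix (Fin r) (Fin r) ℝ)
  (B1 : Matrix (Fin p) (Fin m) ℝ) (B2 : Matrix (Fin r) (Fin m) ℝ) (K : Matrix (Fin r) (Fin p) ℝ)

lemma lam_smul_one_sub_srtrW :
    lam • (1 : Matrix (Fin p) (Fin p) FF) - srtrW A11 A12 A21 A22 K =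
      lamI (A11 - A12 * K) -
        mapF A12 * (lamI (A22 + K * A12))⁻¹ * mapF (AKmat A11 A12 A21 A22 K) := by
  rw [srtrW, sub_add_eq_sub_sub]
  rfl

lemma isUnit_lam_smul_one_sub_srtrW :
    IsUnit (lam • (1 : Matrix (Fin p) (Fin p) FF) - srtrW A11 A12 A21 A22 K) := by
  rw [lam_smul_one_sub_srtrW]
  exact isUnit_lamI_sub_mul_inv_lamI_mul _ _ _ _

lemma plantG_eq_toRows₁ :
    plantG A11 A12 A21 A22 B1 B2 =
      ((lamI (fromBlocks A11 A12 A21 A22))⁻¹ * mapF (fromRows B1 B2)).toRows₁ := by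
  rw [plantG, Matrix.mul_assoc, ← fromRows_toRows ((lamI _)⁻¹ * _), fromCols_mul_fromRows,
    Matrix.one_mul, Matrix.zero_mul, add_zero, toRows₁_fromRows]

lemma lam_smul_one_sub_srtrW_mul_plantG :
    (lam • (1 : Matrix (Fin p) (Fin p) FF) - srtrW A11 A12 A21 A22 K) *
      plantG A11 A12 A21 A22 B1 B2 = srtrV A12 A22 B1 B2 K := by
  set X := (lamI (fromBlocks A11 A12 A21 A22))⁻¹ * mapF (fromRows B1 B2) with hXdef
  have hX : lamI (fromBlocks A11 A12 A21 A22) * X = mapF (fromRows B1 B2) := by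
    rw [hXdef, ← Matrix.mul_assoc, lamI_mul_inv_lamI, Matrix.one_mul]
  rw [← fromRows_toRows X, lamI_fromBlocks, fromBlocks_mul_fromRows, mapF_fromRows] at hX
  obtain ⟨hB1, hB2⟩ := fromRows_inj.eq_iff.1 hX
  have hObs : mapF (K * B1 + B2) = lamI (A22 + K * A12) * (X.toRows₂ + mapF K * X.toRows₁) -
      mapF (AKmat A11 A12 A21 A22 K) * X.toRows₁ := by
    rw [mapF_add, mapF_mul, ← hB1, ← hB2]
    simp only [lamI, AKmat, mapF_add, mapF_sub, mapF_mul, Matrix.mul_add, Matrix.add_mul,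
      Matrix.mul_sub, Matrix.sub_mul, Matrix.neg_mul, Matrix.mul_neg, Matrix.smul_mul,
      Matrix.mul_smul, Matrix.one_mul, Matrix.mul_assoc]
    abel
  have hlamI : lamI (A11 - A12 * K) = lamI A11 + mapF A12 * mapF K := by
    rw [lamI, lamI, mapF_sub, mapF_mul]
    abel
  rw [lam_smul_one_sub_srtrW, plantG_eq_toRows₁, ← hXdef, srtrV, hObs, ← hB1, hlamI]
  simp only [Matrix.mul_add, Matrix.add_mul, Matrix.mul_sub, Matrix.sub_mul, Matrix.neg_mul,
    Matrix.mul_assoc, inv_lamI_mul_lamI_mul]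
  abel

lemma plantG_eq_inv_mul_srtrV :
    plantG A11 A12 A21 A22 B1 B2 =
      (lam • (1 : Matrix (Fin p) (Fin p) FF) - srtrW A11 A12 A21 A22 K)⁻¹ *
        srtrV A12 A22 B1 B2 K := by
  rw [← lam_smul_one_sub_srtrW_mul_plantG A11 A12 A21 A22 B1 B2 K, ← Matrix.mul_assoc,
    nonsing_inv_mul _ ((isUnit_iff_isUnit_det _).1 (isUnit_lam_smul_one_sub_srtrW _ _ _ _ K)),
    Matrix.one_mul]

end SRTR

lemma fromCols_zero_mul_inv_lamI_fromBlocks_zero₂₁ {j k l : Type} [Fintype k] [DecidableEq k]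
    [Fintype l] [DecidableEq l] (P : Matrix j k FF) (A : Matrix k k ℝ) (B : Matrix k l ℝ)
    (D : Matrix l l ℝ) :
    fromCols P (0 : Matrix j l FF) * (lamI (fromBlocks A B 0 D))⁻¹ =
      fromCols (P * (lamI A)⁻¹) (P * (lamI A)⁻¹ * mapF B * (lamI D)⁻¹) := by
  rw [lamI_fromBlocks, mapF_zero, neg_zero, inv_fromBlocks_zero₂₁_of_isUnit_iff _ _ _
    (iff_of_true (isUnit_lamI A) (isUnit_lamI D)), fromCols_mul_fromBlocks]
  simp [Matrix.mul_assoc]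

lemma transfer_eq_fromCols_theta_mul {p r m : ℕ} (A11 : Matrix (Fin p) (Fin p) ℝ)
    (A12 : Matrix (Fin p) (Fin r) ℝ) (A21 : Matrix (Fin r) (Fin p) ℝ)
    (A22 : Matrix (Fin r) (Fin r) ℝ) (B1 : Matrix (Fin p) (Fin m) ℝ)
    (B2 : Matrix (Fin r) (Fin m) ℝ) (Ax Bx Cx : Matrix (Fin p) (Fin p) ℝ)
    (K : Matrix (Fin r) (Fin p) ℝ) :
    fromCols (mapF Cx) (0 : Matrix (Fin p) (Fin r) FF) *
        (lamI (fromBlocks Ax (Bx * A12) 0 (A22 + K * A12)))⁻¹ *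
        mapF (fromBlocks (Ax * Bx - Bx * A11 + Bx * A12 * K) (Bx * B1)
          (K * A12 * K + A22 * K - K * A11 - A21) (K * B1 + B2)) +
        fromCols (mapF (Cx * Bx)) (0 : Matrix (Fin p) (Fin m) FF) =
      fromCols
        (mapF Cx * (lamI Ax)⁻¹ * mapF Bx *
          (lam • (1 : Matrix (Fin p) (Fin p) FF) - srtrW A11 A12 A21 A22 K))
        (mapF Cx * (lamI Ax)⁻¹ * mapF Bx * srtrV A12 A22 B1 B2 K) := by
  have hlam : mapF Cx * (lamI Ax)⁻¹ * mapF Bx * (lam • (1 : Matrix (Fin p) (Fin p) FF)) =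
      mapF Cx * mapF Bx + mapF Cx * ((lamI Ax)⁻¹ * (mapF Ax * mapF Bx)) := by
    rw [Matrix.mul_smul, Matrix.mul_one, Matrix.mul_assoc, ← Matrix.mul_smul,
      lam_smul_inv_lamI_mul, Matrix.mul_add]
  rw [fromCols_zero_mul_inv_lamI_fromBlocks_zero₂₁, mapF_fromBlocks, fromCols_mul_fromBlocks,
    fromCols_add_fromCols, Matrix.mul_sub, hlam, srtrW, srtrV, AKmat]
  congr 1
  · simp only [mapF_add, mapF_sub, mapF_mul, Matrix.mul_add, Matrix.mul_sub, Matrix.mul_assoc]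
    abel
  · simp only [mapF_add, mapF_mul, Matrix.mul_add, Matrix.mul_assoc, add_zero]

theorem stmt_8_general (p r m : ℕ)
    (A11 : Matrix (Fin p) (Fin p) ℝ) (A12 : Matrix (Fin p) (Fin r) ℝ)
    (A21 : Matrix (Fin r) (Fin p) ℝ) (A22 : Matrix (Fin r) (Fin r) ℝ)
    (B1 : Matrix (Fin p) (Fin m) ℝ) (B2 : Matrix (Fin r) (Fin m) ℝ)
    (Ax Bx Cx : Matrix (Fin p) (Fin p) ℝ)
    (hAx : IsHurwitz Ax) (hBx : IsUnit Bx) (hCx : IsUnit Cx)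
    (K : Matrix (Fin r) (Fin p) ℝ) (hK : IsHurwitz (A22 + K * A12)) :
    let Theta : Matrix (Fin p) (Fin p) FF := mapF Cx * (lamI Ax)⁻¹ * mapF Bx
    let Ahat : Matrix (Fin p ⊕ Fin r) (Fin p ⊕ Fin r) ℝ :=
      fromBlocks Ax (Bx * A12) 0 (A22 + K * A12)
    let Bhat : Matrix (Fin p ⊕ Fin r) (Fin p ⊕ Fin m) ℝ :=
      fromBlocks (Ax * Bx - Bx * A11 + Bx * A12 * K) (Bx * B1)
        (K * A12 * K + A22 * K - K * A11 - A21) (K * B1 + B2)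
    let MN : Matrix (Fin p) (Fin p ⊕ Fin m) FF :=
      fromCols (mapF Cx) (0 : Matrix (Fin p) (Fin r) FF) * (lamI Ahat)⁻¹ * mapF Bhat +
        fromCols (mapF (Cx * Bx)) (0 : Matrix (Fin p) (Fin m) FF)
    let M : Matrix (Fin p) (Fin p) FF := MN.toCols₁
    let N : Matrix (Fin p) (Fin m) FF := MN.toCols₂
    Theta * (lam • (1 : Matrix (Fin p) (Fin p) FF) - srtrW A11 A12 A21 A22 K) = M ∧
    Theta * srtrV A12 A22 B1 B2 K = N ∧
    IsUnit M ∧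
    M⁻¹ * N = plantG A11 A12 A21 A22 B1 B2 ∧
    (∀ i j, StableF (M i j)) ∧ (∀ i j, StableF (N i j)) := by
  intro Theta Ahat Bhat MN M N
  have hMN : MN = fromCols (Theta * (lam • 1 - srtrW A11 A12 A21 A22 K))
      (Theta * srtrV A12 A22 B1 B2 K) :=
    transfer_eq_fromCols_theta_mul A11 A12 A21 A22 B1 B2 Ax Bx Cx K
  have hM : Theta * (lam • 1 - srtrW A11 A12 A21 A22 K) = M := by
    simp only [M, hMN, toCols₁_fromCols]
  have hN : Theta * srtrV A12 A22 B1 B2 K = N := by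
    simp only [N, hMN, toCols₂_fromCols]
  have hTheta : IsUnit Theta :=
    ((isUnit_mapF hCx).mul (isUnit_nonsing_inv_iff.2 (isUnit_lamI Ax))).mul (isUnit_mapF hBx)
  have hMN_stable (i : Fin p) (j : Fin p ⊕ Fin m) : MN i j ∈ stableSubring := by
    have := (hAx.fromBlocks_zero₂₁ hK (Bx * A12)).transfer_apply_mem_stableSubring
      (fromCols Cx 0) Bhat (fromCols (Cx * Bx) 0) i j
    rwa [mapF_fromCols, mapF_fromCols, mapF_zero, mapF_zero] at this
  refine ⟨hM, hN, hM ▸ hTheta.mul (isUnit_lam_smul_one_sub_srtrW A11 A12 A21 A22 K), ?_,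
    fun i j => hMN_stable i (.inl j), fun i j => hMN_stable i (.inr j)⟩
  rw [← hM, ← hN, Matrix.mul_inv_rev, Matrix.mul_assoc, ← Matrix.mul_assoc Theta⁻¹,
    nonsing_inv_mul _ ((isUnit_iff_isUnit_det _).1 hTheta), Matrix.one_mul,
    plantG_eq_inv_mul_srtrV A11 A12 A21 A22 B1 B2 K]

/-- multiplying `[λ I_p - W, V]` by `Θ = C_x (λ I - A_x)⁻¹ B_x` yields an
LCF over the stability domain: `Θ (λ I_p - W) = M`, `Θ V = N`, `M` is invertible,
`M⁻¹ N = G`, and all entries of `M` and `N` are stable. -/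
theorem stmt_8 (p r m : ℕ) (hp : 0 < p) (hr : 0 < r) (hm : 0 < m)
    (A11 : Matrix (Fin p) (Fin p) ℝ) (A12 : Matrix (Fin p) (Fin r) ℝ)
    (A21 : Matrix (Fin r) (Fin p) ℝ) (A22 : Matrix (Fin r) (Fin r) ℝ)
    (B1 : Matrix (Fin p) (Fin m) ℝ) (B2 : Matrix (Fin r) (Fin m) ℝ)
    (Ax Bx Cx : Matrix (Fin p) (Fin p) ℝ)
    (hAx : IsHurwitz Ax) (hBx : IsUnit Bx) (hCx : IsUnit Cx)
    (K : Matrix (Fin r) (Fin p) ℝ) (hK : IsHurwitz (A22 + K * A12)) :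
    let Theta : Matrix (Fin p) (Fin p) FF := mapF Cx * (lamI Ax)⁻¹ * mapF Bx
    let Ahat : Matrix (Fin p ⊕ Fin r) (Fin p ⊕ Fin r) ℝ :=
      fromBlocks Ax (Bx * A12) 0 (A22 + K * A12)
    let Bhat : Matrix (Fin p ⊕ Fin r) (Fin p ⊕ Fin m) ℝ :=
      fromBlocks (Ax * Bx - Bx * A11 + Bx * A12 * K) (Bx * B1)
        (K * A12 * K + A22 * K - K * A11 - A21) (K * B1 + B2)
    let MN : Matrix (Fin p) (Fin p ⊕ Fin m) FF :=
      fromCols (mapF Cx) (0 : Matrix (Fin p) (Fin r) FF) * (lamI Ahat)⁻¹ * mapF Bhat +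
        fromCols (mapF (Cx * Bx)) (0 : Matrix (Fin p) (Fin m) FF)
    let M : Matrix (Fin p) (Fin p) FF := MN.toCols₁
    let N : Matrix (Fin p) (Fin m) FF := MN.toCols₂
    Theta * (lam • (1 : Matrix (Fin p) (Fin p) FF) - srtrW A11 A12 A21 A22 K) = M ∧
    Theta * srtrV A12 A22 B1 B2 K = N ∧
    IsUnit M ∧
    M⁻¹ * N = plantG A11 A12 A21 A22 B1 B2 ∧
    (∀ i j, StableF (M i j)) ∧ (∀ i j, StableF (N i j)) :=
  stmt_8_general p r m A11 A12 A21 A22 B1 B2 Ax Bx Cx hAx hBx hCx K hK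
end
end
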